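/- Suppose η = 0 and w is a classical solution of the controlled tube system with boundary input u ≡ 0. Then the energy E is constant on (0,∞). -/

import Mathlib

/-!
With `η = 0`, along a solution the energy density `e = w_ss² + γ w_s² + w_t²` obeys the local
conservation law `∂ₜ e = 2 ∂ₛ F` with flux `F = w_ss w_st - w_sss w_t + γ w_s w_t`: this is where
the equation `w_tt = γ w_ss - w_ssss` is used. The boundary conditions make `F` vanish at `s = 0`
(`w_t = w_ss = 0`) and at `s = 1` (`w_ss = 0`, `w_sss = γ w_s`), so `∫₀¹ ∂ₜ e ds = 0` for all
`t > 0`; integrating in `t` and exchanging the order of integration gives `E t₁ = E t₂`.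
-/

open Set MeasureTheory

/-- ∂w/∂s -/
noncomputable def dws (w : ℝ → ℝ → ℝ) (s t : ℝ) : ℝ := deriv (fun σ => w σ t) s
/-- ∂²w/∂s² -/
noncomputable def dwss (w : ℝ → ℝ → ℝ) (s t : ℝ) : ℝ := deriv (fun σ => dws w σ t) s
/-- ∂³w/∂s³ -/
noncomputable def dwsss (w : ℝ → ℝ → ℝ) (s t : ℝ) : ℝ := deriv (fun σ => dwss w σ t) s
/-- ∂⁴w/∂s⁴ -/
noncomputable def dwssss (w : ℝ → ℝ → ℝ) (s t : ℝ) : ℝ := deriv (fun σ => dwsss w σ t) s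
/-- ∂w/∂t -/
noncomputable def dwt (w : ℝ → ℝ → ℝ) (s t : ℝ) : ℝ := deriv (fun τ => w s τ) t
/-- ∂²w/∂t² -/
noncomputable def dwtt (w : ℝ → ℝ → ℝ) (s t : ℝ) : ℝ := deriv (fun τ => dwt w s τ) t
/-- ∂²w/∂s∂t -/
noncomputable def dwst (w : ℝ → ℝ → ℝ) (s t : ℝ) : ℝ := deriv (fun σ => dwt w σ t) s

/-- A classical solution of the controlled tube system with boundary input `u`. -/
def IsClassicalSolution (β η γ : ℝ) (u : ℝ → ℝ) (w : ℝ → ℝ → ℝ) : Prop :=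
  ContDiff ℝ 4 (Function.uncurry w) ∧
  (∀ s ∈ Icc (0:ℝ) 1, ∀ t > (0:ℝ),
    dwssss w s t - (γ - η^2) * dwss w s t + 2*β*η * dwst w s t + dwtt w s t = 0) ∧
  (∀ t > (0:ℝ), w 0 t = 0) ∧
  (∀ t > (0:ℝ), dwss w 0 t = 0) ∧
  (∀ t > (0:ℝ), dwss w 1 t = u t) ∧
  (∀ t > (0:ℝ), dwsss w 1 t = (γ - η^2) * dws w 1 t)

/-- The energy of the tube system. -/
noncomputable def energy (η γ : ℝ) (w : ℝ → ℝ → ℝ) (t : ℝ) : ℝ :=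
  (1/2) * ∫ s in (0:ℝ)..1,
    ((dwss w s t)^2 + (γ - η^2) * (dws w s t)^2 + (dwt w s t)^2)

open Function

noncomputable def partialFst {E : Type*} [NormedAddCommGroup E] [NormedSpace ℝ E] (f : ℝ × ℝ → E)
    (p : ℝ × ℝ) : E :=
  fderiv ℝ f p (1, 0)

noncomputable def partialSnd {E : Type*} [NormedAddCommGroup E] [NormedSpace ℝ E] (f : ℝ × ℝ → E)
    (p : ℝ × ℝ) : E :=
  fderiv ℝ f p (0, 1)

local notation "∂₁" => partialFst
local notation "∂₂" => partialSnd

section PartialDerivatives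

variable {E : Type*} [NormedAddCommGroup E] [NormedSpace ℝ E] {f : ℝ × ℝ → E}

theorem DifferentiableAt.hasDerivAt_partialFst {s t : ℝ} (hf : DifferentiableAt ℝ f (s, t)) :
    HasDerivAt (fun σ ↦ f (σ, t)) (∂₁ f (s, t)) s :=
  hf.hasFDerivAt.comp_hasDerivAt s ((hasDerivAt_id s).prodMk (hasDerivAt_const s t))

theorem DifferentiableAt.hasDerivAt_partialSnd {s t : ℝ} (hf : DifferentiableAt ℝ f (s, t)) :
    HasDerivAt (fun τ ↦ f (s, τ)) (∂₂ f (s, t)) t :=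
  hf.hasFDerivAt.comp_hasDerivAt t ((hasDerivAt_const t s).prodMk (hasDerivAt_id t))

theorem ContDiff.partialFst {m n : WithTop ℕ∞} (hf : ContDiff ℝ n f) (hmn : m + 1 ≤ n) :
    ContDiff ℝ m (∂₁ f) :=
  (ContinuousLinearMap.apply ℝ E ((1 : ℝ), (0 : ℝ))).contDiff.comp (hf.fderiv_right hmn)

theorem ContDiff.partialSnd {m n : WithTop ℕ∞} (hf : ContDiff ℝ n f) (hmn : m + 1 ≤ n) :
    ContDiff ℝ m (∂₂ f) :=
  (ContinuousLinearMap.apply ℝ E ((0 : ℝ), (1 : ℝ))).contDiff.comp (hf.fderiv_right hmn)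

theorem partialFst_partialSnd {n : WithTop ℕ∞} (hf : ContDiff ℝ n f) (hn : 2 ≤ n) :
    ∂₁ (∂₂ f) = ∂₂ (∂₁ f) := by
  funext p
  have hdf : HasFDerivAt (fderiv ℝ f) (fderiv ℝ (fderiv ℝ f) p) p :=
    ((hf.fderiv_right (m := 1) hn).differentiable one_ne_zero p).hasFDerivAt
  have hfderiv (v x : ℝ × ℝ) :
      fderiv ℝ (fun q ↦ fderiv ℝ f q v) p x = fderiv ℝ (fderiv ℝ f) p x v := by
    have h : HasFDerivAt (fun q ↦ fderiv ℝ f q v)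
        ((ContinuousLinearMap.apply ℝ E v).comp (fderiv ℝ (fderiv ℝ f) p)) p :=
      (ContinuousLinearMap.apply ℝ E v).hasFDerivAt.comp p hdf
    rw [h.fderiv]
    rfl
  show fderiv ℝ (fun q ↦ fderiv ℝ f q (0, 1)) p (1, 0) =
    fderiv ℝ (fun q ↦ fderiv ℝ f q (1, 0)) p (0, 1)
  rw [hfderiv, hfderiv]
  exact (hf.contDiffAt.isSymmSndFDerivAt (by simpa using hn)) _ _

theorem deriv_fst_eq_partialFst {g : ℝ → ℝ → E} (hg : ∀ s t, g s t = f (s, t))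
    (hf : Differentiable ℝ f) (s t : ℝ) : deriv (fun σ ↦ g σ t) s = ∂₁ f (s, t) := by
  simp only [hg]
  exact (hf (s, t)).hasDerivAt_partialFst.deriv

theorem deriv_snd_eq_partialSnd {g : ℝ → ℝ → E} (hg : ∀ s t, g s t = f (s, t))
    (hf : Differentiable ℝ f) (s t : ℝ) : deriv (fun τ ↦ g s τ) t = ∂₂ f (s, t) := by
  simp only [hg]
  exact (hf (s, t)).hasDerivAt_partialSnd.deriv

theorem integral_section_eq_of_integral_partialSnd_eq_zero [CompleteSpace E]
    (hf : ContDiff ℝ 1 f) {a b c d : ℝ} (hzero : ∀ t ∈ uIcc c d, ∫ s in a..b, ∂₂ f (s, t) = 0) :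
    ∫ s in a..b, f (s, c) = ∫ s in a..b, f (s, d) := by
  have hcont : Continuous (∂₂ f) := (hf.partialSnd (m := 0) (by norm_num)).continuous
  have hftc (s : ℝ) : ∫ t in c..d, ∂₂ f (s, t) = f (s, d) - f (s, c) :=
    intervalIntegral.integral_eq_sub_of_hasDerivAt
      (fun t _ ↦ (hf.differentiable one_ne_zero (s, t)).hasDerivAt_partialSnd)
      ((hcont.comp (Continuous.prodMk_right s)).intervalIntegrable _ _)
  have hint : IntegrableOn (uncurry fun s t ↦ ∂₂ f (s, t)) (uIoc a b ×ˢ uIoc c d) :=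
    (hcont.continuousOn.integrableOn_compact (isCompact_uIcc.prod isCompact_uIcc)).mono_set
      (prod_mono uIoc_subset_uIcc uIoc_subset_uIcc)
  have hsection (t : ℝ) : IntervalIntegrable (fun s ↦ f (s, t)) volume a b :=
    (hf.continuous.comp (Continuous.prodMk_left t)).intervalIntegrable _ _
  rw [eq_comm, ← sub_eq_zero, ← intervalIntegral.integral_sub (hsection d) (hsection c)]
  calc ∫ s in a..b, (f (s, d) - f (s, c))
      = ∫ s in a..b, ∫ t in c..d, ∂₂ f (s, t) := by simp only [hftc]
    _ = ∫ t in c..d, ∫ s in a..b, ∂₂ f (s, t) := intervalIntegral_intervalIntegral_swap hint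
    _ = 0 := by rw [intervalIntegral.integral_congr hzero, intervalIntegral.integral_zero]

end PartialDerivatives

section TubeEnergy

variable {γ : ℝ} {f : ℝ × ℝ → ℝ}

noncomputable def energyDensity (γ : ℝ) (f : ℝ × ℝ → ℝ) (p : ℝ × ℝ) : ℝ :=
  ∂₁ (∂₁ f) p ^ 2 + γ * ∂₁ f p ^ 2 + ∂₂ f p ^ 2

noncomputable def energyFlux (γ : ℝ) (f : ℝ × ℝ → ℝ) (p : ℝ × ℝ) : ℝ :=
  ∂₁ (∂₁ f) p * ∂₂ (∂₁ f) p - ∂₁ (∂₁ (∂₁ f)) p * ∂₂ f p + γ * ∂₁ f p * ∂₂ f p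

theorem ContDiff.energyDensity (hf : ContDiff ℝ 4 f) : ContDiff ℝ 2 (energyDensity γ f) := by
  have h1 : ContDiff ℝ 2 (∂₁ f) := hf.partialFst (by norm_num)
  have h2 : ContDiff ℝ 2 (∂₂ f) := hf.partialSnd (by norm_num)
  have h11 : ContDiff ℝ 2 (∂₁ (∂₁ f)) := (hf.partialFst (m := 3) (by norm_num)).partialFst
    (by norm_num)
  unfold _root_.energyDensity
  fun_prop

theorem ContDiff.energyFlux (hf : ContDiff ℝ 4 f) : ContDiff ℝ 1 (energyFlux γ f) := by
  have h1 : ContDiff ℝ 3 (∂₁ f) := hf.partialFst (by norm_num)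
  have h11 : ContDiff ℝ 2 (∂₁ (∂₁ f)) := h1.partialFst (by norm_num)
  have h111 : ContDiff ℝ 1 (∂₁ (∂₁ (∂₁ f))) := h11.partialFst (by norm_num)
  have h21 : ContDiff ℝ 1 (∂₂ (∂₁ f)) := h1.partialSnd (by norm_num)
  have h2 : ContDiff ℝ 1 (∂₂ f) := hf.partialSnd (by norm_num)
  unfold _root_.energyFlux
  exact (((h11.of_le one_le_two).mul h21).sub (h111.mul h2)).add
    ((contDiff_const.mul (h1.of_le (by norm_num))).mul h2)

theorem partialSnd_energyDensity (hf : ContDiff ℝ 4 f) {p : ℝ × ℝ}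
    (hpde : ∂₁ (∂₁ (∂₁ (∂₁ f))) p - γ * ∂₁ (∂₁ f) p + ∂₂ (∂₂ f) p = 0) :
    ∂₂ (energyDensity γ f) p = 2 * ∂₁ (energyFlux γ f) p := by
  obtain ⟨s, t⟩ := p
  have h1 : ContDiff ℝ 3 (∂₁ f) := hf.partialFst (by norm_num)
  have h2 : ContDiff ℝ 3 (∂₂ f) := hf.partialSnd (by norm_num)
  have h11 : ContDiff ℝ 2 (∂₁ (∂₁ f)) := h1.partialFst (by norm_num)
  have h21 : ContDiff ℝ 2 (∂₂ (∂₁ f)) := h1.partialSnd (by norm_num)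
  have h111 : ContDiff ℝ 1 (∂₁ (∂₁ (∂₁ f))) := h11.partialFst (by norm_num)
  have dσ {g : ℝ × ℝ → ℝ} (hg : Differentiable ℝ g) := (hg (s, t)).hasDerivAt_partialFst
  have dτ {g : ℝ × ℝ → ℝ} (hg : Differentiable ℝ g) := (hg (s, t)).hasDerivAt_partialSnd
  have hdensity := (((dτ (h11.differentiable (by norm_num))).pow 2).add
    (((dτ (h1.differentiable (by norm_num))).pow 2).const_mul γ)).add
    ((dτ (h2.differentiable (by norm_num))).pow 2)
  have hflux := (((dσ (h11.differentiable (by norm_num))).mul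
    (dσ (h21.differentiable (by norm_num)))).sub
    ((dσ (h111.differentiable (by norm_num))).mul (dσ (h2.differentiable (by norm_num))))).add
    (((dσ (h1.differentiable (by norm_num))).const_mul γ).mul
      (dσ (h2.differentiable (by norm_num))))
  rw [(hf.energyDensity.differentiable (by norm_num) (s, t)).hasDerivAt_partialSnd.unique
      hdensity,
    (hf.energyFlux.differentiable (by norm_num) (s, t)).hasDerivAt_partialFst.unique hflux,
    partialFst_partialSnd h1 (by norm_num), partialFst_partialSnd hf (by norm_num)]
  linear_combination (2 * ∂₂ f (s, t)) * hpde

theorem integral_partialSnd_energyDensity (hf : ContDiff ℝ 4 f) {t : ℝ}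
    (hpde : ∀ s ∈ Icc (0 : ℝ) 1,
      ∂₁ (∂₁ (∂₁ (∂₁ f))) (s, t) - γ * ∂₁ (∂₁ f) (s, t) + ∂₂ (∂₂ f) (s, t) = 0) :
    ∫ s in (0 : ℝ)..1, ∂₂ (energyDensity γ f) (s, t) =
      2 * (energyFlux γ f (1, t) - energyFlux γ f (0, t)) := by
  have hflux : ContDiff ℝ 1 (energyFlux γ f) := hf.energyFlux
  rw [intervalIntegral.integral_congr (g := fun s ↦ 2 * ∂₁ (energyFlux γ f) (s, t))
      fun s hs ↦ partialSnd_energyDensity hf (hpde s (by simpa using hs)),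
    intervalIntegral.integral_const_mul,
    intervalIntegral.integral_eq_sub_of_hasDerivAt
      (fun s _ ↦ (hflux.differentiable one_ne_zero (s, t)).hasDerivAt_partialFst)
      (((hflux.partialFst (m := 0) (by norm_num)).continuous.comp
        (Continuous.prodMk_left t)).intervalIntegrable _ _)]

theorem integral_energyDensity_eq (hf : ContDiff ℝ 4 f)
    (hpde : ∀ s ∈ Icc (0 : ℝ) 1, ∀ t > 0,
      ∂₁ (∂₁ (∂₁ (∂₁ f))) (s, t) - γ * ∂₁ (∂₁ f) (s, t) + ∂₂ (∂₂ f) (s, t) = 0)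
    (hflux₀ : ∀ t > 0, energyFlux γ f (0, t) = 0) (hflux₁ : ∀ t > 0, energyFlux γ f (1, t) = 0)
    {t₁ t₂ : ℝ} (ht₁ : 0 < t₁) (ht₂ : 0 < t₂) :
    ∫ s in (0 : ℝ)..1, energyDensity γ f (s, t₁) =
      ∫ s in (0 : ℝ)..1, energyDensity γ f (s, t₂) := by
  refine integral_section_eq_of_integral_partialSnd_eq_zero (hf.energyDensity.of_le
    (by norm_num)) fun t ht ↦ ?_
  have ht : 0 < t := (lt_min ht₁ ht₂).trans_le ht.1
  rw [integral_partialSnd_energyDensity hf fun s hs ↦ hpde s hs t ht, hflux₀ t ht, hflux₁ t ht,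
    sub_zero, mul_zero]

end TubeEnergy

section ClassicalSolution

variable {w : ℝ → ℝ → ℝ}

theorem dws_eq_partialFst (hw : ContDiff ℝ 4 (uncurry w)) (s t : ℝ) :
    dws w s t = ∂₁ (uncurry w) (s, t) :=
  deriv_fst_eq_partialFst (fun _ _ ↦ rfl) (hw.differentiable (by norm_num)) s t

theorem dwss_eq_partialFst (hw : ContDiff ℝ 4 (uncurry w)) (s t : ℝ) :
    dwss w s t = ∂₁ (∂₁ (uncurry w)) (s, t) :=
  deriv_fst_eq_partialFst (dws_eq_partialFst hw)
    ((hw.partialFst (m := 3) (by norm_num)).differentiable (by norm_num)) s t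

theorem dwsss_eq_partialFst (hw : ContDiff ℝ 4 (uncurry w)) (s t : ℝ) :
    dwsss w s t = ∂₁ (∂₁ (∂₁ (uncurry w))) (s, t) :=
  deriv_fst_eq_partialFst (dwss_eq_partialFst hw)
    (((hw.partialFst (m := 3) (by norm_num)).partialFst (m := 2) (by norm_num)).differentiable
      (by norm_num)) s t

theorem dwssss_eq_partialFst (hw : ContDiff ℝ 4 (uncurry w)) (s t : ℝ) :
    dwssss w s t = ∂₁ (∂₁ (∂₁ (∂₁ (uncurry w)))) (s, t) :=
  deriv_fst_eq_partialFst (dwsss_eq_partialFst hw)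
    ((((hw.partialFst (m := 3) (by norm_num)).partialFst (m := 2) (by norm_num)).partialFst
      (m := 1) (by norm_num)).differentiable (by norm_num)) s t

theorem dwt_eq_partialSnd (hw : ContDiff ℝ 4 (uncurry w)) (s t : ℝ) :
    dwt w s t = ∂₂ (uncurry w) (s, t) :=
  deriv_snd_eq_partialSnd (fun _ _ ↦ rfl) (hw.differentiable (by norm_num)) s t

theorem dwtt_eq_partialSnd (hw : ContDiff ℝ 4 (uncurry w)) (s t : ℝ) :
    dwtt w s t = ∂₂ (∂₂ (uncurry w)) (s, t) :=
  deriv_snd_eq_partialSnd (dwt_eq_partialSnd hw)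
    ((hw.partialSnd (m := 3) (by norm_num)).differentiable (by norm_num)) s t

theorem energy_eq_integral_energyDensity {γ : ℝ} (hw : ContDiff ℝ 4 (uncurry w)) (t : ℝ) :
    energy 0 γ w t = 1 / 2 * ∫ s in (0 : ℝ)..1, energyDensity γ (uncurry w) (s, t) := by
  simp only [energy, energyDensity, dwss_eq_partialFst hw, dws_eq_partialFst hw,
    dwt_eq_partialSnd hw]
  norm_num

end ClassicalSolution

theorem energy_constant_of_no_flow_general (β η γ : ℝ) (hη0 : η = 0)
    (w : ℝ → ℝ → ℝ)
    (hw : IsClassicalSolution β η γ (fun _ => 0) w) :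
    ∀ t₁ ∈ Ioi (0:ℝ), ∀ t₂ ∈ Ioi (0:ℝ), energy η γ w t₁ = energy η γ w t₂ := by
  subst hη0
  obtain ⟨hsmooth, hpde, hpinned, hhinged, hmoment, hshear⟩ := hw
  have hvelocity₀ : ∀ t > 0, ∂₂ (uncurry w) (0, t) = 0 := fun t ht ↦ by
    rw [← dwt_eq_partialSnd hsmooth, dwt,
      (Filter.eventuallyEq_of_mem (Ioi_mem_nhds ht) hpinned).deriv_eq, deriv_const]
  intro t₁ ht₁ t₂ ht₂
  rw [energy_eq_integral_energyDensity hsmooth, energy_eq_integral_energyDensity hsmooth]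
  congr 1
  refine integral_energyDensity_eq hsmooth (fun s hs t ht ↦ ?_) (fun t ht ↦ ?_) (fun t ht ↦ ?_)
    ht₁ ht₂
  · simpa [dwssss_eq_partialFst hsmooth, dwss_eq_partialFst hsmooth, dwtt_eq_partialSnd hsmooth]
      using hpde s hs t ht
  · simp [energyFlux, ← dwss_eq_partialFst hsmooth, hhinged t ht, hvelocity₀ t ht]
  · simp only [energyFlux, ← dwss_eq_partialFst hsmooth, ← dwsss_eq_partialFst hsmooth,
      ← dws_eq_partialFst hsmooth, hmoment t ht, hshear t ht]
    ring

/-- if `η = 0` and the boundary input vanishes identically, then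
the energy is constant on `(0,∞)`. -/
theorem energy_constant_of_no_flow (β η γ : ℝ) (hβ : β ∈ Ioo (0:ℝ) 1)
    (hη : 0 ≤ η) (hγ : η^2 < γ) (hη0 : η = 0)
    (w : ℝ → ℝ → ℝ)
    (hw : IsClassicalSolution β η γ (fun _ => 0) w) :
    ∀ t₁ ∈ Ioi (0:ℝ), ∀ t₂ ∈ Ioi (0:ℝ), energy η γ w t₁ = energy η γ w t₂ :=
  energy_constant_of_no_flow_general β η γ hη0 w hw
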